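/- arXiv:1512.04880 — 2 statements merged into one kernel-verified Lean document; each statement's English description precedes it below -/
import Mathlib

section
/- Conversely, for q ≠ 1 and q ≠ 0, if H : ℝⁿ × ℝⁿ → ℝ is a C² function such that the Jacobian of the deformed Hamiltonian vector field X^q_H = (q⁻¹ ∂H/∂y, −∂H/∂x) is infinitesimally symplectic at every point, then all mixed partial derivatives ∂²H/∂yᵢ∂xⱼ vanish identically; hence (on ℝ²ⁿ) H is simple, i.e., H(x,y) = H'(x) + H''(y) for some C² functions H', H''. -/
noncomputable def pdx {n : ℕ} (H : (Fin n → ℝ) × (Fin n → ℝ) → ℝ)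
    (p : (Fin n → ℝ) × (Fin n → ℝ)) (i : Fin n) : ℝ :=
  fderiv ℝ H p (Pi.single i 1, 0)

noncomputable def pdy {n : ℕ} (H : (Fin n → ℝ) × (Fin n → ℝ) → ℝ)
    (p : (Fin n → ℝ) × (Fin n → ℝ)) (i : Fin n) : ℝ :=
  fderiv ℝ H p (0, Pi.single i 1)

/-- Standard symplectic form on `ℝⁿ × ℝⁿ`. -/
def sympl {n : ℕ} (Z₁ Z₂ : (Fin n → ℝ) × (Fin n → ℝ)) : ℝ :=
  ∑ i, (Z₁.2 i * Z₂.1 i - Z₁.1 i * Z₂.2 i)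

/-- The deformed Hamiltonian vector field `X^q_H`. -/
noncomputable def Xq {n : ℕ} (q : ℝ) (H : (Fin n → ℝ) × (Fin n → ℝ) → ℝ)
    (p : (Fin n → ℝ) × (Fin n → ℝ)) : (Fin n → ℝ) × (Fin n → ℝ) :=
  (fun i => q⁻¹ * pdy H p i, fun i => -(pdx H p i))

/-- Mixed second partial `∂²H/∂yᵢ∂xⱼ` (first in `xⱼ`, then in `yᵢ`). -/
noncomputable def pdyx {n : ℕ} (H : (Fin n → ℝ) × (Fin n → ℝ) → ℝ)
    (p : (Fin n → ℝ) × (Fin n → ℝ)) (i j : Fin n) : ℝ :=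
  fderiv ℝ (fun p' => pdx H p' j) p (0, Pi.single i 1)

/-!
The Jacobian of `X^q_H` at `z` is the fixed linear map `XqCLM` applied to the Hessian `B` of `H`.
Testing infinitesimal symplecticity on the pair `(0, w)`, `(v, 0)` and using the symmetry of `B`
gives `(q⁻¹ - 1) B (0, w) (v, 0) = 0`, so the mixed block of the Hessian vanishes when `q ≠ 1`.
Then `∂ₓH` does not depend on `y`, hence `H (x, y) - H (x, 0)` does not depend on `x`, which is the
splitting `H (x, y) = (H (x, 0) - H (0, 0)) + H (0, y)`.
-/

theorem differentiable_fderiv_of_contDiff_two {E F : Type*} [NormedAddCommGroup E]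
    [NormedSpace ℝ E] [NormedAddCommGroup F] [NormedSpace ℝ F] {f : E → F}
    (hf : ContDiff ℝ 2 f) : Differentiable ℝ (fderiv ℝ f) :=
  (hf.fderiv_right (m := 1) (by norm_num)).differentiable (by norm_num)

section Splitting

variable {E F G : Type*} [NormedAddCommGroup E] [NormedSpace ℝ E] [NormedAddCommGroup F]
  [NormedSpace ℝ F] [NormedAddCommGroup G] [NormedSpace ℝ G] {H : E × F → G}

theorem fderiv_apply_inl_eq_of_fderiv_fderiv_inr_inl_eq_zero (hH : ContDiff ℝ 2 H)
    (hmixed : ∀ z v w, fderiv ℝ (fderiv ℝ H) z (0, w) (v, 0) = 0) (x : E) (y : F) (v : E) :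
    fderiv ℝ H (x, y) (v, 0) = fderiv ℝ H (x, 0) (v, 0) := by
  have hH' := differentiable_fderiv_of_contDiff_two hH
  have hderiv : ∀ y', HasFDerivAt (fun y => fderiv ℝ H (x, y) (v, 0)) (0 : F →L[ℝ] G) y' := by
    intro y'
    refine (((hH' (x, y')).hasFDerivAt.comp y' (hasFDerivAt_prodMk_right x y')).clm_apply
      (hasFDerivAt_const (v, 0) y')).congr_fderiv ?_
    ext w
    simp [hmixed]
  exact is_const_of_fderiv_eq_zero (fun y' => (hderiv y').differentiableAt)
    (fun y' => (hderiv y').fderiv) y 0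

theorem eq_sub_add_of_fderiv_fderiv_inr_inl_eq_zero (hH : ContDiff ℝ 2 H)
    (hmixed : ∀ z v w, fderiv ℝ (fderiv ℝ H) z (0, w) (v, 0) = 0) (x : E) (y : F) :
    H (x, y) = (H (x, 0) - H 0) + H (0, y) := by
  have hH₁ : Differentiable ℝ H := hH.differentiable (by norm_num)
  have hderiv : ∀ x', HasFDerivAt (fun x => H (x, y) - H (x, 0)) (0 : E →L[ℝ] G) x' := by
    intro x'
    refine (((hH₁ (x', y)).hasFDerivAt.comp x' (hasFDerivAt_prodMk_left x' y)).sub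
      ((hH₁ (x', 0)).hasFDerivAt.comp x' (hasFDerivAt_prodMk_left x' (0 : F)))).congr_fderiv ?_
    ext v
    simp [fderiv_apply_inl_eq_of_fderiv_fderiv_inr_inl_eq_zero hH hmixed x' y v]
  have := is_const_of_fderiv_eq_zero (fun x' => (hderiv x').differentiableAt)
    (fun x' => (hderiv x').fderiv) x 0
  rw [Prod.zero_eq_mk, sub_add_comm, ← this, sub_add_cancel]

end Splitting

section Deformed

variable {n : ℕ}

theorem apply_eq_sum_mul_apply_single {ι : Type*} [Fintype ι] [DecidableEq ι]
    (L : (ι → ℝ) →L[ℝ] ℝ) (v : ι → ℝ) : L v = ∑ i, v i * L (Pi.single i 1) := by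
  conv_lhs => rw [pi_eq_sum_univ' v]
  simp

-- `Xq q H` is definitionally `XqCLM n q ∘ fderiv ℝ H`.
noncomputable def XqCLM (n : ℕ) (q : ℝ) :
    (((Fin n → ℝ) × (Fin n → ℝ)) →L[ℝ] ℝ) →L[ℝ] (Fin n → ℝ) × (Fin n → ℝ) :=
  (ContinuousLinearMap.pi fun i => q⁻¹ • ContinuousLinearMap.apply ℝ ℝ (0, Pi.single i 1)).prod
    (ContinuousLinearMap.pi fun i => -ContinuousLinearMap.apply ℝ ℝ (Pi.single i 1, 0))

theorem XqCLM_apply (q : ℝ) (L : ((Fin n → ℝ) × (Fin n → ℝ)) →L[ℝ] ℝ) :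
    XqCLM n q L = (fun i => q⁻¹ * L (0, Pi.single i 1), fun i => -L (Pi.single i 1, 0)) :=
  rfl

theorem fderiv_Xq_apply {q : ℝ} {H : (Fin n → ℝ) × (Fin n → ℝ) → ℝ} (hH : ContDiff ℝ 2 H)
    (z Y : (Fin n → ℝ) × (Fin n → ℝ)) :
    fderiv ℝ (Xq q H) z Y = XqCLM n q (fderiv ℝ (fderiv ℝ H) z Y) := by
  have hH' := differentiable_fderiv_of_contDiff_two hH
  change fderiv ℝ (XqCLM n q ∘ fderiv ℝ H) z Y = _
  rw [fderiv_comp z (XqCLM n q).differentiableAt (hH' z), (XqCLM n q).fderiv]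
  rfl

theorem sympl_XqCLM_inl (q : ℝ) (L : ((Fin n → ℝ) × (Fin n → ℝ)) →L[ℝ] ℝ) (v : Fin n → ℝ) :
    sympl (XqCLM n q L) (v, 0) = -L (v, 0) := by
  have hv : L (v, 0) = ∑ i, v i * L (Pi.single i 1, 0) :=
    apply_eq_sum_mul_apply_single (L.comp (.inl ℝ _ _)) v
  simp [sympl, XqCLM_apply, hv, mul_comm]

theorem sympl_inr_XqCLM (q : ℝ) (L : ((Fin n → ℝ) × (Fin n → ℝ)) →L[ℝ] ℝ) (w : Fin n → ℝ) :
    sympl (0, w) (XqCLM n q L) = q⁻¹ * L (0, w) := by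
  have hw : L (0, w) = ∑ i, w i * L (0, Pi.single i 1) :=
    apply_eq_sum_mul_apply_single (L.comp (.inr ℝ _ _)) w
  simp [sympl, XqCLM_apply, hw, Finset.mul_sum, mul_left_comm]

theorem fderiv_fderiv_inr_inl_eq_zero_of_sympl_Xq {q : ℝ} (hq1 : q ≠ 1)
    {H : (Fin n → ℝ) × (Fin n → ℝ) → ℝ} (hH : ContDiff ℝ 2 H)
    (hsymp : ∀ z Y₁ Y₂ : (Fin n → ℝ) × (Fin n → ℝ),
      sympl (fderiv ℝ (Xq q H) z Y₁) Y₂ + sympl Y₁ (fderiv ℝ (Xq q H) z Y₂) = 0)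
    (z : (Fin n → ℝ) × (Fin n → ℝ)) (v w : Fin n → ℝ) :
    fderiv ℝ (fderiv ℝ H) z (0, w) (v, 0) = 0 := by
  have h := hsymp z (0, w) (v, 0)
  rw [fderiv_Xq_apply hH, fderiv_Xq_apply hH, sympl_XqCLM_inl, sympl_inr_XqCLM,
    hH.contDiffAt.isSymmSndFDerivAt (by simp) (v, 0)] at h
  have hq : q⁻¹ - 1 ≠ 0 := sub_ne_zero.mpr (inv_ne_one.mpr hq1)
  exact (mul_eq_zero.mp (by linear_combination h : (q⁻¹ - 1) * _ = 0)).resolve_left hq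

theorem pdyx_eq_fderiv_fderiv {H : (Fin n → ℝ) × (Fin n → ℝ) → ℝ} (hH : ContDiff ℝ 2 H)
    (p : (Fin n → ℝ) × (Fin n → ℝ)) (i j : Fin n) :
    pdyx H p i j = fderiv ℝ (fderiv ℝ H) p (0, Pi.single i 1) (Pi.single j 1, 0) := by
  have hH' := differentiable_fderiv_of_contDiff_two hH
  simp [pdyx, pdx, fderiv_clm_apply (hH' p) (differentiableAt_const _)]

end Deformed

theorem stmt12_general {n : ℕ} (q : ℝ) (hq1 : q ≠ 1)
    (H : (Fin n → ℝ) × (Fin n → ℝ) → ℝ) (hH : ContDiff ℝ 2 H)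
    (hsymp : ∀ z Y₁ Y₂ : (Fin n → ℝ) × (Fin n → ℝ),
      sympl (fderiv ℝ (Xq q H) z Y₁) Y₂ + sympl Y₁ (fderiv ℝ (Xq q H) z Y₂) = 0) :
    (∀ p : (Fin n → ℝ) × (Fin n → ℝ), ∀ i j, pdyx H p i j = 0) ∧
    ∃ H' H'' : (Fin n → ℝ) → ℝ, ContDiff ℝ 2 H' ∧ ContDiff ℝ 2 H'' ∧
      ∀ x y : Fin n → ℝ, H (x, y) = H' x + H'' y := by
  have hmixed := fderiv_fderiv_inr_inl_eq_zero_of_sympl_Xq hq1 hH hsymp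
  refine ⟨fun p i j => by rw [pdyx_eq_fderiv_fderiv hH, hmixed], fun x => H (x, 0) - H 0,
    fun y => H (0, y), ?_, ?_, eq_sub_add_of_fderiv_fderiv_inr_inl_eq_zero hH hmixed⟩
  · exact (hH.comp (contDiff_prodMk_left 0)).sub contDiff_const
  · exact hH.comp (contDiff_prodMk_right 0)

theorem stmt12 {n : ℕ} (q : ℝ) (hq0 : q ≠ 0) (hq1 : q ≠ 1)
    (H : (Fin n → ℝ) × (Fin n → ℝ) → ℝ) (hH : ContDiff ℝ 2 H)
    (hsymp : ∀ z Y₁ Y₂ : (Fin n → ℝ) × (Fin n → ℝ),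
      sympl (fderiv ℝ (Xq q H) z Y₁) Y₂ + sympl Y₁ (fderiv ℝ (Xq q H) z Y₂) = 0) :
    (∀ p : (Fin n → ℝ) × (Fin n → ℝ), ∀ i j, pdyx H p i j = 0) ∧
    ∃ H' H'' : (Fin n → ℝ) → ℝ, ContDiff ℝ 2 H' ∧ ContDiff ℝ 2 H'' ∧
      ∀ x y : Fin n → ℝ, H (x, y) = H' x + H'' y :=
  stmt12_general q hq1 H hH hsymp
end

section
/- For q ≠ 0, 1 and a C² function H on ℝ²ⁿ, the Lie derivative of the standard symplectic form ω along the deformed Hamiltonian vector field X^q_H equals (q⁻¹ − 1) Σ_{i,j} (∂²H/∂yᵢ∂xⱼ) dyᵢ ∧ dxⱼ. In matrix form: (DX^q_H)ᵀΩ + Ω DX^q_H = (q⁻¹ − 1) S, where S is the 2n×2n matrix with blocks [[0, −Bᵀ],[B, 0]] and B_{ij} = ∂²H/∂yᵢ∂xⱼ. -/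
/-! Since `X^q_H = L_q ∘ dH` for a continuous linear map `L_q` on covectors,
`DX^q_H = L_q ∘ D²H`. Splitting vectors into their `x`- and `y`-parts and using the symmetry
of `D²H`, the `xx`- and `yy`-blocks of `D²H` cancel in `ω(DX Y₁, Y₂) + ω(Y₁, DX Y₂)`, while the
two mixed blocks enter with weights `q⁻¹` and `1`, leaving `q⁻¹ - 1` times the mixed part. -/

open ContinuousLinearMap

theorem LinearMap.sum_smul_apply_single {R M ι : Type*} [CommSemiring R] [AddCommMonoid M]
    [Module R M] [Fintype ι] [DecidableEq ι] (g : (ι → R) →ₗ[R] M) (u : ι → R) :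
    ∑ i, u i • g (Pi.single i 1) = g u := by
  conv_rhs => rw [← Finset.univ_sum_single u]
  simp only [map_sum, ← map_smul, ← Pi.single_smul', smul_eq_mul, mul_one]

theorem apply_mk_zero_eq_sum {n : ℕ} (g : ((Fin n → ℝ) × (Fin n → ℝ)) →L[ℝ] ℝ)
    (v : Fin n → ℝ) : g (v, 0) = ∑ j, v j * g (Pi.single j 1, 0) :=
  ((g.comp (inl ℝ _ _)).toLinearMap.sum_smul_apply_single v).symm

theorem apply_zero_mk_eq_sum {n : ℕ} (g : ((Fin n → ℝ) × (Fin n → ℝ)) →L[ℝ] ℝ)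
    (v : Fin n → ℝ) : g (0, v) = ∑ j, v j * g (0, Pi.single j 1) :=
  ((g.comp (inr ℝ _ _)).toLinearMap.sum_smul_apply_single v).symm

noncomputable def deformedHamiltonianL {n : ℕ} (c : ℝ) :
    (((Fin n → ℝ) × (Fin n → ℝ)) →L[ℝ] ℝ) →L[ℝ] (Fin n → ℝ) × (Fin n → ℝ) :=
  (pi fun i => c • apply ℝ ℝ ((0, Pi.single i 1) : (Fin n → ℝ) × (Fin n → ℝ))).prod
    (pi fun i => -apply ℝ ℝ ((Pi.single i 1, 0) : (Fin n → ℝ) × (Fin n → ℝ)))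

theorem Xq_eq_comp {n : ℕ} (q : ℝ) (H : (Fin n → ℝ) × (Fin n → ℝ) → ℝ) :
    Xq q H = deformedHamiltonianL q⁻¹ ∘ fderiv ℝ H := rfl

theorem sympl_swap {n : ℕ} (Z₁ Z₂ : (Fin n → ℝ) × (Fin n → ℝ)) :
    sympl Z₁ Z₂ = -sympl Z₂ Z₁ := by
  simp only [sympl, ← Finset.sum_neg_distrib]
  exact Finset.sum_congr rfl fun i _ => by ring

theorem fderiv_Xq {n : ℕ} (q : ℝ) {H : (Fin n → ℝ) × (Fin n → ℝ) → ℝ}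
    {p : (Fin n → ℝ) × (Fin n → ℝ)} (hH : DifferentiableAt ℝ (fderiv ℝ H) p) :
    fderiv ℝ (Xq q H) p = (deformedHamiltonianL q⁻¹).comp (fderiv ℝ (fderiv ℝ H) p) := by
  rw [Xq_eq_comp]
  exact ((deformedHamiltonianL q⁻¹).hasFDerivAt.comp p hH.hasFDerivAt).fderiv

theorem pdyx_eq {n : ℕ} {H : (Fin n → ℝ) × (Fin n → ℝ) → ℝ}
    {p : (Fin n → ℝ) × (Fin n → ℝ)} (hH : DifferentiableAt ℝ (fderiv ℝ H) p) (i j : Fin n) :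
    pdyx H p i j = fderiv ℝ (fderiv ℝ H) p (0, Pi.single i 1) (Pi.single j 1, 0) :=
  congrArg (· (0, Pi.single i 1))
    ((apply ℝ ℝ ((Pi.single j 1, 0) : (Fin n → ℝ) × (Fin n → ℝ))).hasFDerivAt.comp p
      hH.hasFDerivAt).fderiv

theorem sympl_deformedHamiltonianL {n : ℕ} (c : ℝ)
    (g : ((Fin n → ℝ) × (Fin n → ℝ)) →L[ℝ] ℝ) (Y : (Fin n → ℝ) × (Fin n → ℝ)) :
    sympl (deformedHamiltonianL c g) Y = -(g (Y.1, 0) + c * g (0, Y.2)) := by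
  rw [apply_mk_zero_eq_sum, apply_zero_mk_eq_sum, Finset.mul_sum, ← Finset.sum_add_distrib,
    ← Finset.sum_neg_distrib]
  refine Finset.sum_congr rfl fun i _ => ?_
  simp only [deformedHamiltonianL, prod_apply, coe_pi', smul_apply, apply_apply, smul_eq_mul,
    neg_apply]
  ring

theorem sum_sum_apply_single_mul {n : ℕ}
    (B : ((Fin n → ℝ) × (Fin n → ℝ)) →L[ℝ] ((Fin n → ℝ) × (Fin n → ℝ)) →L[ℝ] ℝ)
    (u v : Fin n → ℝ) :
    ∑ i, ∑ j, B (0, Pi.single i 1) (Pi.single j 1, 0) * (u i * v j) = B (0, u) (v, 0) := by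
  have inner (i : Fin n) : ∑ j, B (0, Pi.single i 1) (Pi.single j 1, 0) * (u i * v j) =
      u i * B (0, Pi.single i 1) (v, 0) := by
    rw [apply_mk_zero_eq_sum, Finset.mul_sum]
    exact Finset.sum_congr rfl fun j _ => by ring
  simp only [inner]
  exact (apply_zero_mk_eq_sum (B.flip (v, 0)) u).symm

theorem sympl_deformedHamiltonianL_add_sympl {n : ℕ} (c : ℝ)
    (B : ((Fin n → ℝ) × (Fin n → ℝ)) →L[ℝ] ((Fin n → ℝ) × (Fin n → ℝ)) →L[ℝ] ℝ)
    (hB : ∀ v w, B v w = B w v) (Y₁ Y₂ : (Fin n → ℝ) × (Fin n → ℝ)) :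
    sympl (deformedHamiltonianL c (B Y₁)) Y₂ + sympl Y₁ (deformedHamiltonianL c (B Y₂)) =
      (c - 1) * (B (0, Y₁.2) (Y₂.1, 0) - B (0, Y₂.2) (Y₁.1, 0)) := by
  rw [sympl_swap Y₁, sympl_deformedHamiltonianL, sympl_deformedHamiltonianL]
  obtain ⟨x₁, y₁⟩ := Y₁
  obtain ⟨x₂, y₂⟩ := Y₂
  have split (x y : Fin n → ℝ) : ((x, y) : (Fin n → ℝ) × (Fin n → ℝ)) = (x, 0) + (0, y) := by
    simp
  rw [split x₁ y₁, split x₂ y₂]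
  simp only [map_add, add_apply, Prod.fst_add, Prod.snd_add, add_zero, zero_add]
  linear_combination -hB (x₁, 0) (x₂, 0) - c * hB (0, y₁) (0, y₂) - c * hB (0, y₁) (x₂, 0)
    - c * hB (x₁, 0) (0, y₂)

theorem stmt13_general {n : ℕ} (q : ℝ)
    (H : (Fin n → ℝ) × (Fin n → ℝ) → ℝ) (hH : ContDiff ℝ 2 H) :
    ∀ p Y₁ Y₂ : (Fin n → ℝ) × (Fin n → ℝ),
      sympl (fderiv ℝ (Xq q H) p Y₁) Y₂ + sympl Y₁ (fderiv ℝ (Xq q H) p Y₂) =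
        (q⁻¹ - 1) * ∑ i, ∑ j,
          pdyx H p i j * (Y₁.2 i * Y₂.1 j - Y₁.1 j * Y₂.2 i) := by
  intro p Y₁ Y₂
  have hD2 : DifferentiableAt ℝ (fderiv ℝ H) p :=
    (hH.fderiv_right (m := 1) le_rfl).differentiable one_ne_zero p
  have hsymm : IsSymmSndFDerivAt ℝ H p := hH.contDiffAt.isSymmSndFDerivAt (by simp)
  rw [fderiv_Xq q hD2, comp_apply, comp_apply,
    sympl_deformedHamiltonianL_add_sympl q⁻¹ _ hsymm]
  simp only [pdyx_eq hD2, mul_sub, Finset.sum_sub_distrib, mul_comm (Y₁.1 _) (Y₂.2 _),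
    sum_sum_apply_single_mul]

theorem stmt13 {n : ℕ} (q : ℝ) (hq0 : q ≠ 0) (hq1 : q ≠ 1)
    (H : (Fin n → ℝ) × (Fin n → ℝ) → ℝ) (hH : ContDiff ℝ 2 H) :
    ∀ p Y₁ Y₂ : (Fin n → ℝ) × (Fin n → ℝ),
      sympl (fderiv ℝ (Xq q H) p Y₁) Y₂ + sympl Y₁ (fderiv ℝ (Xq q H) p Y₂) =
        (q⁻¹ - 1) * ∑ i, ∑ j,
          pdyx H p i j * (Y₁.2 i * Y₂.1 j - Y₁.1 j * Y₂.2 i) :=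
  stmt13_general q H hH
end
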